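/- For any Blotto data and any positive solution γ* of Equation (2), the following evaluation holds: Σ_{i=1}^n v^A_i · ∫_{[0,∞)} F_{B*_i}(x) dμ_{A*_i}(x) = Σ_{i∈Ω_A(γ*)} v^A_i (1 − γ* v^B_i/(2 v^A_i)) + Σ_{i∉Ω_A(γ*)} (v^A_i)²/(2 γ* v^B_i). -/

import Mathlib

/-!
Every `μ_{A*_i}` is an atom of mass `a` at `0` plus a uniform density on `(0, r]`, and
`F_{B*_i}` is the distribution function of a law of the same shape with atom `b` and the same
`r`; for two such laws `∫ F_B dμ_A = a b + (1 - a)(1 + b) / 2`. Equation (2) says precisely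
`λ*_A = γ* λ*_B`, so on `Ω_A(γ*)` the atoms are `a = 0`, `b = 1 - γ* v^B_i / v^A_i`, and off it
`a = 1 - v^A_i / (γ* v^B_i)`, `b = 0`, which gives the two kinds of summands.
-/

open Finset MeasureTheory

/-- Normalized battlefield values: `nv w i = w i / ∑_j w j`. -/
noncomputable def nv {n : ℕ} (w : Fin n → ℝ) (i : Fin n) : ℝ := w i / ∑ j, w j

/-- The set `Ω_A(γ) = {i : v^A_i / v^B_i > γ}`. -/
noncomputable def OmegaA {n : ℕ} (wA wB : Fin n → ℝ) (γ : ℝ) : Finset (Fin n) :=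
  Finset.univ.filter fun i => γ < nv wA i / nv wB i

/-- Equation (2). -/
def Eq2 {n : ℕ} (XA XB : ℝ) (wA wB : Fin n → ℝ) (γ : ℝ) : Prop :=
  XB * γ / XA =
    (γ ^ 2 * ∑ i ∈ OmegaA wA wB γ, (nv wB i) ^ 2 / nv wA i
        + ∑ i ∈ (OmegaA wA wB γ)ᶜ, nv wA i) /
    (∑ i ∈ OmegaA wA wB γ, nv wB i
        + (γ ^ 2)⁻¹ * ∑ i ∈ (OmegaA wA wB γ)ᶜ, (nv wA i) ^ 2 / nv wB i)

/-- The multiplier λ*_A associated with a solution γ of Equation (2). -/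
noncomputable def lamA {n : ℕ} (XB : ℝ) (wA wB : Fin n → ℝ) (γ : ℝ) : ℝ :=
  γ ^ 2 / (2 * XB) * ∑ i ∈ OmegaA wA wB γ, (nv wB i) ^ 2 / nv wA i
    + 1 / (2 * XB) * ∑ i ∈ (OmegaA wA wB γ)ᶜ, nv wA i

/-- The multiplier λ*_B associated with a solution γ of Equation (2). -/
noncomputable def lamB {n : ℕ} (XA : ℝ) (wA wB : Fin n → ℝ) (γ : ℝ) : ℝ :=
  1 / (2 * XA) * ∑ i ∈ OmegaA wA wB γ, nv wB i
    + 1 / (2 * γ ^ 2 * XA) * ∑ i ∈ (OmegaA wA wB γ)ᶜ, (nv wA i) ^ 2 / nv wB i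

/-- The uniform-type CDF `F_{A*_i}`. -/
noncomputable def FAstar {n : ℕ} (XA XB : ℝ) (wA wB : Fin n → ℝ) (γ : ℝ) (i : Fin n)
    (x : ℝ) : ℝ :=
  if x < 0 then 0
  else if i ∈ OmegaA wA wB γ then
    min (x * lamB XA wA wB γ / nv wB i) 1
  else
    min (1 - nv wA i * lamB XA wA wB γ / (nv wB i * lamA XB wA wB γ)
          + x * lamB XA wA wB γ / nv wB i) 1

/-- The uniform-type CDF `F_{B*_i}`. -/
noncomputable def FBstar {n : ℕ} (XA XB : ℝ) (wA wB : Fin n → ℝ) (γ : ℝ) (i : Fin n)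
    (x : ℝ) : ℝ :=
  if x < 0 then 0
  else if i ∈ OmegaA wA wB γ then
    min (1 - nv wB i * lamA XB wA wB γ / (nv wA i * lamB XA wA wB γ)
          + x * lamA XB wA wB γ / nv wA i) 1
  else
    min (x * lamA XB wA wB γ / nv wA i) 1

noncomputable def atomUniformCDF (a r x : ℝ) : ℝ :=
  if x < 0 then 0 else min (a + (1 - a) / r * x) 1

noncomputable def atomUniformMeasure (a r : ℝ) : Measure ℝ :=
  ENNReal.ofReal a • Measure.dirac 0
    + ENNReal.ofReal ((1 - a) / r) • volume.restrict (Set.Ioc 0 r)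

instance (a r : ℝ) : IsFiniteMeasure (atomUniformMeasure a r) :=
  ⟨by simp [atomUniformMeasure, ENNReal.mul_lt_top, ENNReal.add_lt_top]⟩

theorem atomUniformMeasure_Iic {a r : ℝ} (ha₀ : 0 ≤ a) (ha₁ : a ≤ 1) (hr : 0 < r) (x : ℝ) :
    atomUniformMeasure a r (Set.Iic x) = ENNReal.ofReal (atomUniformCDF a r x) := by
  have hc : 0 ≤ (1 - a) / r := div_nonneg (by linarith) hr.le
  simp only [atomUniformMeasure, atomUniformCDF, Measure.add_apply, Measure.smul_apply,
    Measure.restrict_apply measurableSet_Iic, Set.inter_comm (Set.Iic x), Set.Ioc_inter_Iic,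
    Real.volume_Ioc, smul_eq_mul, Measure.dirac_apply' _ measurableSet_Iic, sub_zero]
  rcases lt_or_ge x 0 with hx | hx
  · simp [hx, not_le.mpr hx, hx.le]
  · rw [if_neg hx.not_gt, Set.indicator_of_mem (Set.mem_Iic.mpr hx), Pi.one_apply, mul_one,
      ← ENNReal.ofReal_mul hc, ← ENNReal.ofReal_add ha₀ (by positivity), mul_min_of_nonneg _ _ hc,
      add_min, div_mul_cancel₀ _ hr.ne', add_sub_cancel, min_comm]

theorem eq_atomUniformMeasure_of_cdf {μ : Measure ℝ} [IsFiniteMeasure μ] {a r : ℝ}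
    (ha₀ : 0 ≤ a) (ha₁ : a ≤ 1) (hr : 0 < r)
    (h : ∀ x, μ (Set.Iic x) = ENNReal.ofReal (atomUniformCDF a r x)) :
    μ = atomUniformMeasure a r :=
  Measure.ext_of_Iic _ _ fun x ↦ by rw [h, atomUniformMeasure_Iic ha₀ ha₁ hr]

theorem atomUniformCDF_of_mem_Ioc {b r x : ℝ} (hb : b ≤ 1) (hx : x ∈ Set.Ioc 0 r) :
    atomUniformCDF b r x = b + (1 - b) / r * x := by
  have hr : 0 < r := hx.1.trans_le hx.2
  rw [atomUniformCDF, if_neg hx.1.le.not_gt, min_eq_left]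
  have : (1 - b) / r * x ≤ (1 - b) / r * r := by gcongr; exact hx.2
  rw [div_mul_cancel₀ _ hr.ne'] at this
  linarith

theorem integral_atomUniformCDF {a b r : ℝ} (ha₀ : 0 ≤ a) (ha₁ : a ≤ 1) (hb : b ≤ 1)
    (hr : 0 < r) :
    ∫ x, atomUniformCDF b r x ∂(atomUniformMeasure a r) = a * b + (1 - a) * (1 + b) / 2 := by
  have hcongr : Set.EqOn (atomUniformCDF b r) (fun x ↦ b + (1 - b) / r * x) (Set.Ioc 0 r) :=
    fun x hx ↦ atomUniformCDF_of_mem_Ioc hb hx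
  have hint : IntegrableOn (atomUniformCDF b r) (Set.Ioc 0 r) :=
    (Continuous.integrableOn_Ioc (by fun_prop)).congr_fun hcongr.symm measurableSet_Ioc
  have hzero : atomUniformCDF b r 0 = b := by simp [atomUniformCDF, hb]
  rw [atomUniformMeasure,
    integral_add_measure ((integrable_dirac (by simp)).smul_measure (by simp))
      (hint.smul_measure (by simp)), integral_smul_measure, integral_smul_measure, integral_dirac,
    setIntegral_congr_fun measurableSet_Ioc hcongr, ← intervalIntegral.integral_of_le hr.le]
  rw [intervalIntegral.integral_add intervalIntegrable_const
      (intervalIntegral.intervalIntegrable_id.const_mul _), intervalIntegral.integral_const,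
    intervalIntegral.integral_const_mul, integral_id, hzero,
    ENNReal.toReal_ofReal ha₀, ENNReal.toReal_ofReal (div_nonneg (by linarith) hr.le)]
  simp only [smul_eq_mul]
  field_simp
  ring

theorem setIntegral_Ici_atomUniformCDF {μ : Measure ℝ} [IsFiniteMeasure μ] {a b r : ℝ}
    (ha₀ : 0 ≤ a) (ha₁ : a ≤ 1) (hb : b ≤ 1) (hr : 0 < r)
    (hμ : ∀ x, μ (Set.Iic x) = ENNReal.ofReal (atomUniformCDF a r x)) :
    ∫ x in Set.Ici 0, atomUniformCDF b r x ∂μ = a * b + (1 - a) * (1 + b) / 2 := by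
  rw [setIntegral_eq_integral_of_forall_compl_eq_zero (s := Set.Ici 0) (f := atomUniformCDF b r)
      fun x hx ↦ if_pos (not_le.mp hx),
    eq_atomUniformMeasure_of_cdf ha₀ ha₁ hr hμ, integral_atomUniformCDF ha₀ ha₁ hb hr]

theorem sum_add_sum_compl_pos {ι : Type*} [Fintype ι] [DecidableEq ι] [Nonempty ι]
    {s : Finset ι} {f g : ι → ℝ} (hf : ∀ i ∈ s, 0 < f i) (hg : ∀ i ∉ s, 0 < g i) :
    0 < ∑ i ∈ s, f i + ∑ i ∈ sᶜ, g i := by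
  rcases s.eq_empty_or_nonempty with rfl | hs
  · simpa using sum_pos (fun i _ ↦ hg i (notMem_empty i)) univ_nonempty
  · exact add_pos_of_pos_of_nonneg (sum_pos hf hs)
      (sum_nonneg fun i hi ↦ (hg i (mem_compl.mp hi)).le)

section Blotto

variable {n : ℕ} {XA XB : ℝ} {wA wB : Fin n → ℝ} {γ : ℝ}

theorem nv_pos {w : Fin n → ℝ} (hw : ∀ i, 0 < w i) (i : Fin n) : 0 < nv w i :=
  div_pos (hw i) (sum_pos (fun j _ ↦ hw j) ⟨i, mem_univ i⟩)

noncomputable def eq2Num (wA wB : Fin n → ℝ) (γ : ℝ) : ℝ :=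
  γ ^ 2 * ∑ i ∈ OmegaA wA wB γ, (nv wB i) ^ 2 / nv wA i + ∑ i ∈ (OmegaA wA wB γ)ᶜ, nv wA i

noncomputable def eq2Den (wA wB : Fin n → ℝ) (γ : ℝ) : ℝ :=
  ∑ i ∈ OmegaA wA wB γ, nv wB i + (γ ^ 2)⁻¹ * ∑ i ∈ (OmegaA wA wB γ)ᶜ, (nv wA i) ^ 2 / nv wB i

theorem eq2Num_pos [Nonempty (Fin n)] (hwA : ∀ i, 0 < wA i) (hwB : ∀ i, 0 < wB i)
    (hγ : γ ≠ 0) : 0 < eq2Num wA wB γ := by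
  rw [eq2Num, mul_sum]
  exact sum_add_sum_compl_pos
    (fun i _ ↦ by have := nv_pos hwA i; have := nv_pos hwB i; positivity)
    (fun i _ ↦ nv_pos hwA i)

theorem eq2Den_pos [Nonempty (Fin n)] (hwA : ∀ i, 0 < wA i) (hwB : ∀ i, 0 < wB i)
    (hγ : γ ≠ 0) : 0 < eq2Den wA wB γ := by
  rw [eq2Den, mul_sum]
  exact sum_add_sum_compl_pos (fun i _ ↦ nv_pos hwB i)
    (fun i _ ↦ by have := nv_pos hwA i; have := nv_pos hwB i; positivity)

theorem lamA_eq_eq2Num_div : lamA XB wA wB γ = eq2Num wA wB γ / (2 * XB) := by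
  rw [lamA, eq2Num]; ring

theorem lamB_eq_eq2Den_div : lamB XA wA wB γ = eq2Den wA wB γ / (2 * XA) := by
  rw [lamB, eq2Den]; ring

theorem lamB_pos [Nonempty (Fin n)] (hwA : ∀ i, 0 < wA i) (hwB : ∀ i, 0 < wB i)
    (hXA : 0 < XA) (hγ : γ ≠ 0) : 0 < lamB XA wA wB γ := by
  rw [lamB_eq_eq2Den_div]
  have := eq2Den_pos hwA hwB hγ
  positivity

theorem Eq2.lamA_eq_mul_lamB [Nonempty (Fin n)] (heq : Eq2 XA XB wA wB γ)
    (hwA : ∀ i, 0 < wA i) (hwB : ∀ i, 0 < wB i) (hXA : 0 < XA) (hγ : γ ≠ 0) :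
    lamA XB wA wB γ = γ * lamB XA wA wB γ := by
  have hN := eq2Num_pos hwA hwB hγ
  have hD := eq2Den_pos hwA hwB hγ
  have hcross : XB * γ * eq2Den wA wB γ = eq2Num wA wB γ * XA := by
    rw [Eq2, ← eq2Num, ← eq2Den, div_eq_div_iff hXA.ne' hD.ne'] at heq
    exact heq
  have hXB : XB ≠ 0 := by
    rintro rfl
    nlinarith
  rw [lamA_eq_eq2Num_div, lamB_eq_eq2Den_div]
  field_simp
  linear_combination -hcross

theorem FAstar_eq_atomUniformCDF_of_mem {i : Fin n} (hi : i ∈ OmegaA wA wB γ) :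
    FAstar XA XB wA wB γ i = atomUniformCDF 0 (nv wB i / lamB XA wA wB γ) := by
  ext x
  simp only [FAstar, atomUniformCDF, if_pos hi]
  rw [sub_zero, one_div_div, zero_add, mul_comm x, mul_div_right_comm]

theorem FBstar_eq_atomUniformCDF_of_mem {i : Fin n} (hi : i ∈ OmegaA wA wB γ) (hvB : nv wB i ≠ 0)
    (hlamB : lamB XA wA wB γ ≠ 0) :
    FBstar XA XB wA wB γ i = atomUniformCDF
      (1 - nv wB i * lamA XB wA wB γ / (nv wA i * lamB XA wA wB γ))
      (nv wB i / lamB XA wA wB γ) := by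
  ext x
  simp only [FBstar, atomUniformCDF, if_pos hi]
  congr 3
  field_simp
  ring

theorem FAstar_eq_atomUniformCDF_of_notMem {i : Fin n} (hi : i ∉ OmegaA wA wB γ) (hvA : nv wA i ≠ 0)
    (hlamA : lamA XB wA wB γ ≠ 0) :
    FAstar XA XB wA wB γ i = atomUniformCDF
      (1 - nv wA i * lamB XA wA wB γ / (nv wB i * lamA XB wA wB γ))
      (nv wA i / lamA XB wA wB γ) := by
  ext x
  simp only [FAstar, atomUniformCDF, if_neg hi]
  congr 3
  field_simp
  ring

theorem FBstar_eq_atomUniformCDF_of_notMem {i : Fin n} (hi : i ∉ OmegaA wA wB γ) :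
    FBstar XA XB wA wB γ i = atomUniformCDF 0 (nv wA i / lamA XB wA wB γ) := by
  ext x
  simp only [FBstar, atomUniformCDF, if_neg hi]
  rw [sub_zero, one_div_div, zero_add, mul_comm x, mul_div_right_comm]

theorem setIntegral_FBstar_of_mem {i : Fin n} (hi : i ∈ OmegaA wA wB γ)
    (hwA : ∀ i, 0 < wA i) (hwB : ∀ i, 0 < wB i) (hXA : 0 < XA) (hγ : 0 < γ)
    (heq : Eq2 XA XB wA wB γ) (μ : Measure ℝ) [IsFiniteMeasure μ]
    (hcdf : ∀ x, μ (Set.Iic x) = ENNReal.ofReal (FAstar XA XB wA wB γ i x)) :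
    ∫ x in Set.Ici 0, FBstar XA XB wA wB γ i x ∂μ = 1 - γ * nv wB i / (2 * nv wA i) := by
  have : Nonempty (Fin n) := ⟨i⟩
  have hvA := nv_pos hwA i
  have hvB := nv_pos hwB i
  have hlamB := lamB_pos hwA hwB hXA hγ.ne'
  have hrel := heq.lamA_eq_mul_lamB hwA hwB hXA hγ.ne'
  have hb : 0 ≤ nv wB i * lamA XB wA wB γ / (nv wA i * lamB XA wA wB γ) := by
    rw [hrel]; positivity
  rw [FBstar_eq_atomUniformCDF_of_mem hi hvB.ne' hlamB.ne',
    setIntegral_Ici_atomUniformCDF le_rfl zero_le_one (sub_le_self _ hb) (by positivity)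
      fun x ↦ by rw [hcdf, FAstar_eq_atomUniformCDF_of_mem hi], hrel]
  field_simp
  ring

theorem setIntegral_FBstar_of_notMem {i : Fin n} (hi : i ∉ OmegaA wA wB γ)
    (hwA : ∀ i, 0 < wA i) (hwB : ∀ i, 0 < wB i) (hXA : 0 < XA) (hγ : 0 < γ)
    (heq : Eq2 XA XB wA wB γ) (μ : Measure ℝ) [IsFiniteMeasure μ]
    (hcdf : ∀ x, μ (Set.Iic x) = ENNReal.ofReal (FAstar XA XB wA wB γ i x)) :
    ∫ x in Set.Ici 0, FBstar XA XB wA wB γ i x ∂μ = nv wA i / (2 * γ * nv wB i) := by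
  have : Nonempty (Fin n) := ⟨i⟩
  have hvA := nv_pos hwA i
  have hvB := nv_pos hwB i
  have hlamB := lamB_pos hwA hwB hXA hγ.ne'
  have hrel := heq.lamA_eq_mul_lamB hwA hwB hXA hγ.ne'
  have hlamA : 0 < lamA XB wA wB γ := by rw [hrel]; positivity
  have hratio : nv wA i ≤ γ * nv wB i := by
    simpa [OmegaA, div_le_iff₀ hvB] using hi
  have hle_one : nv wA i * lamB XA wA wB γ / (nv wB i * lamA XB wA wB γ) ≤ 1 := by
    rw [hrel, div_le_one (by positivity)]
    nlinarith
  have hnonneg : 0 ≤ nv wA i * lamB XA wA wB γ / (nv wB i * lamA XB wA wB γ) := by positivity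
  rw [FBstar_eq_atomUniformCDF_of_notMem hi,
    setIntegral_Ici_atomUniformCDF (sub_nonneg.mpr hle_one) (sub_le_self _ hnonneg) zero_le_one
      (by positivity)
      fun x ↦ by rw [hcdf, FAstar_eq_atomUniformCDF_of_notMem hi hvA.ne' hlamA.ne'], hrel]
  field_simp
  ring

end Blotto

theorem stmt6_general (n : ℕ) (XA XB : ℝ) (hXA : 0 < XA)
    (wA wB : Fin n → ℝ) (hwA : ∀ i, 0 < wA i) (hwB : ∀ i, 0 < wB i)
    (γ : ℝ) (hγ : 0 < γ) (heq : Eq2 XA XB wA wB γ)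
    (μA : Fin n → Measure ℝ) (hprob : ∀ i, IsProbabilityMeasure (μA i))
    (hcdf : ∀ i x, μA i (Set.Iic x) = ENNReal.ofReal (FAstar XA XB wA wB γ i x)) :
    ∑ i, nv wA i * ∫ x in Set.Ici (0 : ℝ), FBstar XA XB wA wB γ i x ∂(μA i)
      = ∑ i ∈ OmegaA wA wB γ, nv wA i * (1 - γ * nv wB i / (2 * nv wA i))
        + ∑ i ∈ (OmegaA wA wB γ)ᶜ, (nv wA i) ^ 2 / (2 * γ * nv wB i) := by
  rw [← sum_add_sum_compl (OmegaA wA wB γ)]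
  congr 1
  · refine sum_congr rfl fun i hi ↦ ?_
    rw [setIntegral_FBstar_of_mem hi hwA hwB hXA hγ heq (μA i) (hcdf i)]
  · refine sum_congr rfl fun i hi ↦ ?_
    rw [setIntegral_FBstar_of_notMem (mem_compl.mp hi) hwA hwB hXA hγ heq (μA i) (hcdf i)]
    ring

/-- Evaluation of Σ_i v^A_i ∫ F_{B*_i} dμ_{A*_i}. -/
theorem stmt6 (n : ℕ) (hn : 1 ≤ n) (XA XB : ℝ) (hXA : 0 < XA) (hXAB : XA ≤ XB)
    (wA wB : Fin n → ℝ) (hwA : ∀ i, 0 < wA i) (hwB : ∀ i, 0 < wB i)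
    (γ : ℝ) (hγ : 0 < γ) (heq : Eq2 XA XB wA wB γ)
    (μA : Fin n → Measure ℝ) (hprob : ∀ i, IsProbabilityMeasure (μA i))
    (hcdf : ∀ i x, μA i (Set.Iic x) = ENNReal.ofReal (FAstar XA XB wA wB γ i x)) :
    ∑ i, nv wA i * ∫ x in Set.Ici (0 : ℝ), FBstar XA XB wA wB γ i x ∂(μA i)
      = ∑ i ∈ OmegaA wA wB γ, nv wA i * (1 - γ * nv wB i / (2 * nv wA i))
        + ∑ i ∈ (OmegaA wA wB γ)ᶜ, (nv wA i) ^ 2 / (2 * γ * nv wB i) :=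
  stmt6_general n XA XB hXA wA wB hwA hwB γ hγ heq μA hprob hcdf
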